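/- arXiv:2505.01641 — 2 statements merged into one kernel-verified Lean document; each statement's English description precedes it below -/
import Mathlib

section
/- Under Assumption 1, a pair (A,B) ∈ ℝ^{n×n}×ℝ^{n×m} belongs to Σ if and only if there exist matrices M₁, M₂ ∈ ℝ^{n̂×T} such that M₁M₁ᵀ ⪯ I_{n̂}, [I_n A B](𝐗 − EΔ̂_R(M₁))Φ̂₂₂ = 0, and [I_n A B](𝐗 − EΔ̂_N(M₂))(I_T − Φ̂₂₂Φ̂₂₂†) = 0. Equivalently, Σ = Σ_R ∩ Σ_N. -/
open Matrix

noncomputable section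

/-- Moore–Penrose pseudoinverse of a real square matrix, defined via classical choice
(the Moore–Penrose inverse exists and is unique for real matrices). -/
def pinv {k : Type*} [Fintype k] (A : Matrix k k ℝ) : Matrix k k ℝ := by
  classical
  exact if h : ∃ B : Matrix k k ℝ,
      A * B * A = A ∧ B * A * B = B ∧ (A * B)ᵀ = A * B ∧ (B * A)ᵀ = B * A
    then h.choose else 0

/-- Positive semidefinite square root of a real matrix (junk value `0` if not PSD). -/
def msqrt {k : Type*} [Fintype k] [DecidableEq k] (A : Matrix k k ℝ) : Matrix k k ℝ := by
  classical
  exact if h : A.PosSemidef then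
    (h.1.eigenvectorUnitary : Matrix k k ℝ) * diagonal (Real.sqrt ∘ h.1.eigenvalues) *
      (star h.1.eigenvectorUnitary : Matrix k k ℝ) else 0

/-- `Z_{q,r}(N) = { Z : [I; Z]ᵀ N [I; Z] ⪰ 0 }`. -/
def ZSet {q r : Type*} [Fintype q] [Fintype r] [DecidableEq q]
    (N : Matrix (q ⊕ r) (q ⊕ r) ℝ) : Set (Matrix r q ℝ) :=
  {Z | ((fromRows (1 : Matrix q q ℝ) Z)ᵀ * N * fromRows (1 : Matrix q q ℝ) Z).PosSemidef}

/-- `Z⁺_{q,r}(N) = { Z : [I; Z]ᵀ N [I; Z] ≻ 0 }`. -/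
def ZSetP {q r : Type*} [Fintype q] [Fintype r] [DecidableEq q]
    (N : Matrix (q ⊕ r) (q ⊕ r) ℝ) : Set (Matrix r q ℝ) :=
  {Z | ((fromRows (1 : Matrix q q ℝ) Z)ᵀ * N * fromRows (1 : Matrix q q ℝ) Z).PosDef}

/-- `Π_{q,r}`: symmetric matrices `N` with `N₂₂ ⪯ 0`, `ker N₂₂ ⊆ ker N₁₂` and
`N₁₁ - N₁₂ N₂₂† N₁₂ᵀ ⪰ 0`. -/
def PiSet (q r : Type*) [Fintype q] [Fintype r] : Set (Matrix (q ⊕ r) (q ⊕ r) ℝ) :=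
  {N | N.IsSymm ∧ (-(N.toBlocks₂₂)).PosSemidef ∧
      (∀ x : r → ℝ, N.toBlocks₂₂ *ᵥ x = 0 → N.toBlocks₁₂ *ᵥ x = 0) ∧
      (N.toBlocks₁₁ - N.toBlocks₁₂ * pinv N.toBlocks₂₂ * (N.toBlocks₁₂)ᵀ).PosSemidef}

/-- Row index type of the stacked data matrix `[X₊ᵀ, -Xᵀ, -Uᵀ]ᵀ` (`2n+m` rows). -/
abbrev SRows (n m : ℕ) := Fin n ⊕ (Fin n ⊕ Fin m)

/-- `[I_n A B]`. -/
def sysRow {n m : ℕ} (A : Matrix (Fin n) (Fin n) ℝ) (B : Matrix (Fin n) (Fin m) ℝ) :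
    Matrix (Fin n) (SRows n m) ℝ :=
  fromCols (1 : Matrix (Fin n) (Fin n) ℝ) (fromCols A B)

/-- `𝐗 = [X₊ᵀ, -Xᵀ, -Uᵀ]ᵀ`. -/
def bigX {n m T : ℕ} (Xp X : Matrix (Fin n) (Fin T) ℝ) (U : Matrix (Fin m) (Fin T) ℝ) :
    Matrix (SRows n m) (Fin T) ℝ :=
  fromRows Xp (fromRows (-X) (-U))

/-- The data-perturbation set `𝒟 = { EΔ̂ : Δ̂ᵀ ∈ Z(Φ̂) }`. -/
def Dset {n m T nh : ℕ} (E : Matrix (SRows n m) (Fin nh) ℝ)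
    (Φ : Matrix (Fin nh ⊕ Fin T) (Fin nh ⊕ Fin T) ℝ) :
    Set (Matrix (SRows n m) (Fin T) ℝ) :=
  {Δ | ∃ Δh : Matrix (Fin nh) (Fin T) ℝ, Δhᵀ ∈ ZSet Φ ∧ Δ = E * Δh}

/-- `Σ`: systems consistent with the data. -/
def SigmaSet {n m T nh : ℕ} (Xp X : Matrix (Fin n) (Fin T) ℝ) (U : Matrix (Fin m) (Fin T) ℝ)
    (E : Matrix (SRows n m) (Fin nh) ℝ)
    (Φ : Matrix (Fin nh ⊕ Fin T) (Fin nh ⊕ Fin T) ℝ) :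
    Set (Matrix (Fin n) (Fin n) ℝ × Matrix (Fin n) (Fin m) ℝ) :=
  {AB | ∃ Δ' ∈ Dset E Φ, sysRow AB.1 AB.2 * bigX Xp X U = sysRow AB.1 AB.2 * Δ'}

/-- `N = [E 𝐗] Φ̂ [E 𝐗]ᵀ`. -/
def Nmat {n m T nh : ℕ} (Xp X : Matrix (Fin n) (Fin T) ℝ) (U : Matrix (Fin m) (Fin T) ℝ)
    (E : Matrix (SRows n m) (Fin nh) ℝ)
    (Φ : Matrix (Fin nh ⊕ Fin T) (Fin nh ⊕ Fin T) ℝ) :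
    Matrix (SRows n m) (SRows n m) ℝ :=
  fromCols E (bigX Xp X U) * Φ * (fromCols E (bigX Xp X U))ᵀ

/-- `[I_n; 0]` used in the image condition `im E ⊇ im [I_n; 0]`. -/
def iota0 (n m : ℕ) : Matrix (SRows n m) (Fin n) ℝ :=
  fromRows (1 : Matrix (Fin n) (Fin n) ℝ) (0 : Matrix (Fin n ⊕ Fin m) (Fin n) ℝ)

/-- `Δ̂_R(M₁)` from the explicit parametrization of `Z(Φ̂)`. -/
def ΔhatR {nh T : ℕ} (Φ : Matrix (Fin nh ⊕ Fin T) (Fin nh ⊕ Fin T) ℝ)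
    (M1 : Matrix (Fin nh) (Fin T) ℝ) : Matrix (Fin nh) (Fin T) ℝ :=
  -(Φ.toBlocks₁₂ * pinv Φ.toBlocks₂₂) +
    msqrt (Φ.toBlocks₁₁ - Φ.toBlocks₁₂ * pinv Φ.toBlocks₂₂ * (Φ.toBlocks₁₂)ᵀ) * M1 *
      msqrt (pinv (-(Φ.toBlocks₂₂)))

/-- `Δ̂_N(M₂) = M₂ (I - Φ̂₂₂ Φ̂₂₂†)`. -/
def ΔhatN {nh T : ℕ} (Φ : Matrix (Fin nh ⊕ Fin T) (Fin nh ⊕ Fin T) ℝ)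
    (M2 : Matrix (Fin nh) (Fin T) ℝ) : Matrix (Fin nh) (Fin T) ℝ :=
  M2 * ((1 : Matrix (Fin T) (Fin T) ℝ) - Φ.toBlocks₂₂ * pinv Φ.toBlocks₂₂)

/-- `Σ_R`. -/
def SigmaR {n m T nh : ℕ} (Xp X : Matrix (Fin n) (Fin T) ℝ) (U : Matrix (Fin m) (Fin T) ℝ)
    (E : Matrix (SRows n m) (Fin nh) ℝ)
    (Φ : Matrix (Fin nh ⊕ Fin T) (Fin nh ⊕ Fin T) ℝ) :
    Set (Matrix (Fin n) (Fin n) ℝ × Matrix (Fin n) (Fin m) ℝ) :=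
  {AB | ∃ M1 : Matrix (Fin nh) (Fin T) ℝ,
      ((1 : Matrix (Fin nh) (Fin nh) ℝ) - M1 * M1ᵀ).PosSemidef ∧
      sysRow AB.1 AB.2 * (bigX Xp X U - E * ΔhatR Φ M1) * Φ.toBlocks₂₂ = 0}

/-- `Σ_N`. -/
def SigmaN {n m T nh : ℕ} (Xp X : Matrix (Fin n) (Fin T) ℝ) (U : Matrix (Fin m) (Fin T) ℝ)
    (E : Matrix (SRows n m) (Fin nh) ℝ)
    (Φ : Matrix (Fin nh ⊕ Fin T) (Fin nh ⊕ Fin T) ℝ) :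
    Set (Matrix (Fin n) (Fin n) ℝ × Matrix (Fin n) (Fin m) ℝ) :=
  {AB | ∃ M2 : Matrix (Fin nh) (Fin T) ℝ,
      sysRow AB.1 AB.2 * (bigX Xp X U - E * ΔhatN Φ M2) *
        ((1 : Matrix (Fin T) (Fin T) ℝ) - Φ.toBlocks₂₂ * pinv Φ.toBlocks₂₂) = 0}

section
namespace AuxMP

variable {k : Type*} [Fintype k] [DecidableEq k]

def IsMP (A B : Matrix k k ℝ) : Prop :=
  A * B * A = A ∧ B * A * B = B ∧ (A * B)ᵀ = A * B ∧ (B * A)ᵀ = B * A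

omit [DecidableEq k] in
theorem isMP_unique {A B C : Matrix k k ℝ} (hB : IsMP A B) (hC : IsMP A C) : B = C := by
  obtain ⟨b1, b2, b3, b4⟩ := hB
  obtain ⟨c1, c2, c3, c4⟩ := hC
  have hBB : B = B * Bᵀ * Aᵀ := by
    calc B = B * A * B := b2.symm
    _ = B * (A * B) := by rw [mul_assoc]
    _ = B * (A * B)ᵀ := by rw [b3]
    _ = B * (Bᵀ * Aᵀ) := by rw [transpose_mul]
    _ = B * Bᵀ * Aᵀ := by rw [mul_assoc]
  have hB' : B = B * A * C := by
    calc B = B * Bᵀ * Aᵀ := hBB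
    _ = B * Bᵀ * (A * C * A)ᵀ := by rw [c1]
    _ = B * Bᵀ * (Aᵀ * (A*C)ᵀ) := by rw [transpose_mul]
    _ = B * Bᵀ * Aᵀ * (A * C) := by rw [c3]; simp only [mul_assoc]
    _ = B * (A * C) := by rw [← hBB]
    _ = B * A * C := by rw [mul_assoc]
  have hCC : C = Aᵀ * Cᵀ * C := by
    calc C = C * A * C := c2.symm
    _ = (C * A)ᵀ * C := by rw [c4]
    _ = Aᵀ * Cᵀ * C := by rw [transpose_mul]
  have hC' : C = B * A * C := by
    calc C = Aᵀ * Cᵀ * C := hCC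
    _ = (A * B * A)ᵀ * Cᵀ * C := by rw [b1]
    _ = ((B*A)ᵀ * Aᵀ) * Cᵀ * C := by simp only [transpose_mul, mul_assoc]
    _ = B * A * (Aᵀ * Cᵀ * C) := by rw [b4]; simp only [mul_assoc]
    _ = B * A * C := by rw [← hCC]
  exact hB'.trans hC'.symm

omit [DecidableEq k] in
lemma conjT_eq_transpose {l p : Type*} (A : Matrix l p ℝ) : Aᴴ = Aᵀ := by
  ext i j; simp [conjTranspose_apply]

omit [Fintype k] [DecidableEq k] in
lemma isHermitian_iff_symm {A : Matrix k k ℝ} : A.IsHermitian ↔ Aᵀ = A := by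
  rw [Matrix.IsHermitian, conjT_eq_transpose]

/-- collapse rule for products of unitary-conjugated diagonals -/
lemma UDmul {U : Matrix k k ℝ} (hU1 : star U * U = 1) (e f : k → ℝ) :
    (U * diagonal e * star U) * (U * diagonal f * star U)
      = U * diagonal (fun i => e i * f i) * star U := by
  calc (U * diagonal e * star U) * (U * diagonal f * star U)
      = U * (diagonal e * ((star U * U) * (diagonal f * star U))) := by simp only [mul_assoc]
    _ = U * diagonal (fun i => e i * f i) * star U := by
        rw [hU1, one_mul, ← diagonal_mul_diagonal]; simp only [mul_assoc]

omit [DecidableEq k] in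
lemma UDsymm {U : Matrix k k ℝ} (D : Matrix k k ℝ) (hD : Dᵀ = D) :
    (U * D * star U)ᵀ = U * D * star U := by
  have hsU : star U = Uᵀ := by funext i j; simp [Matrix.star_apply]
  rw [hsU, transpose_mul, transpose_mul, transpose_transpose, hD, mul_assoc]

lemma UDherm {U : Matrix k k ℝ} (e : k → ℝ) :
    (U * diagonal e * star U).IsHermitian := by
  rw [isHermitian_iff_symm]
  exact UDsymm _ (diagonal_transpose e)

lemma UDpsd {U : Matrix k k ℝ} {e : k → ℝ} (he : ∀ i, 0 ≤ e i) :
    (U * diagonal e * star U).PosSemidef := by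
  have hd : (diagonal e).PosSemidef := PosSemidef.diagonal he
  exact hd.mul_mul_conjTranspose_same U

lemma pinv_of_UD {U : Matrix k k ℝ} (hU1 : star U * U = 1) (e : k → ℝ)
    {A : Matrix k k ℝ} (hA : A = U * diagonal e * star U) :
    pinv A = U * diagonal (fun i => (e i)⁻¹) * star U := by
  have hmp : IsMP A (U * diagonal (fun i => (e i)⁻¹) * star U) := by
    subst hA
    refine ⟨?_, ?_, ?_, ?_⟩
    · simp only [UDmul hU1]
      have hfe : (fun i => e i * (e i)⁻¹ * e i) = e :=
        funext fun i => by by_cases h : e i = 0 <;> field_simp [h]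
      rw [hfe]
    · simp only [UDmul hU1]
      have hfe : (fun i => (e i)⁻¹ * e i * (e i)⁻¹) = fun i => (e i)⁻¹ :=
        funext fun i => by by_cases h : e i = 0 <;> field_simp [h]
      rw [hfe]
    · simp only [UDmul hU1]; exact UDsymm _ (diagonal_transpose _)
    · simp only [UDmul hU1]; exact UDsymm _ (diagonal_transpose _)
  have hherm : A.IsHermitian := hA ▸ UDherm e
  -- pinv A satisfies MP, so equals candidate by uniqueness
  have hex : ∃ B : Matrix k k ℝ,
      A * B * A = A ∧ B * A * B = B ∧ (A * B)ᵀ = A * B ∧ (B * A)ᵀ = B * A :=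
    ⟨_, hmp⟩
  have hpinv : IsMP A (pinv A) := by
    rw [pinv, dif_pos hex]; exact hex.choose_spec
  exact isMP_unique hpinv hmp

open scoped MatrixOrder in
lemma msqrt_of_UD {U : Matrix k k ℝ} (hU1 : star U * U = 1) {e : k → ℝ}
    (he : ∀ i, 0 ≤ e i) {A : Matrix k k ℝ} (hA : A = U * diagonal e * star U) :
    msqrt A = U * diagonal (fun i => Real.sqrt (e i)) * star U := by
  have hApsd : A.PosSemidef := hA ▸ UDpsd he
  have hXpsd : (U * diagonal (fun i => Real.sqrt (e i)) * star U).PosSemidef :=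
    UDpsd (fun i => Real.sqrt_nonneg _)
  have hsq : (U * diagonal (fun i => Real.sqrt (e i)) * star U) ^ 2 = A := by
    rw [pow_two]
    simp only [UDmul hU1]
    rw [show (fun i => Real.sqrt (e i) * Real.sqrt (e i)) = e from
      funext fun i => Real.mul_self_sqrt (he i), hA]
  rw [msqrt, dif_pos hApsd]
  have h1 : (hApsd.1.eigenvectorUnitary : Matrix k k ℝ) * diagonal (Real.sqrt ∘ hApsd.1.eigenvalues)
      * (star hApsd.1.eigenvectorUnitary : Matrix k k ℝ) = cfc Real.sqrt A := by
    rw [hApsd.1.cfc_eq]; simp [IsHermitian.cfc, Unitary.conjStarAlgAut_apply]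
  have h2 : cfc Real.sqrt A = CFC.sqrt A := by
    rw [CFC.sqrt_eq_cfc, cfc_nnreal_eq_real _ A hApsd.nonneg]; congr 1; funext x; rw [Real.sqrt]
  rw [h1, h2]
  exact (CFC.sqrt_eq_iff A _ hApsd.nonneg hXpsd.nonneg).mpr (by rw [← sq]; exact hsq)

/-- Full spectral package for a PSD real matrix. -/
lemma spectral_package {A : Matrix k k ℝ} (hA : A.PosSemidef) :
    ∃ (U : Matrix k k ℝ) (d : k → ℝ), star U * U = 1 ∧ U * star U = 1 ∧ (∀ i, 0 ≤ d i) ∧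
      A = U * diagonal d * star U ∧
      pinv A = U * diagonal (fun i => (d i)⁻¹) * star U ∧
      msqrt A = U * diagonal (fun i => Real.sqrt (d i)) * star U ∧
      msqrt (pinv A) = U * diagonal (fun i => Real.sqrt ((d i)⁻¹)) * star U := by
  classical
  have hherm := hA.isHermitian
  set U : Matrix k k ℝ := (hherm.eigenvectorUnitary : Matrix k k ℝ) with hUdef
  have hU1 : star U * U = 1 := (Matrix.mem_unitaryGroup_iff').mp hherm.eigenvectorUnitary.2
  have hU2 : U * star U = 1 := (Matrix.mem_unitaryGroup_iff).mp hherm.eigenvectorUnitary.2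
  set d := hherm.eigenvalues with hddef
  have hd : ∀ i, 0 ≤ d i := fun i => hA.eigenvalues_nonneg i
  have hspec : A = U * diagonal d * star U := by
    simpa [Function.comp] using hherm.spectral_theorem
  have hpinv : pinv A = U * diagonal (fun i => (d i)⁻¹) * star U := pinv_of_UD hU1 d hspec
  refine ⟨U, d, hU1, hU2, hd, hspec, hpinv, msqrt_of_UD hU1 hd hspec, ?_⟩
  exact msqrt_of_UD hU1 (fun i => inv_nonneg.mpr (hd i)) hpinv

end AuxMP
namespace AuxMP
open Matrix
variable {k l : Type*} [Fintype k] [DecidableEq k] [Fintype l]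

lemma psd_conj {X : Matrix k k ℝ} (hX : X.PosSemidef) {l : Type*} [Fintype l]
    (B : Matrix l k ℝ) : (B * X * Bᵀ).PosSemidef := by
  have := hX.mul_mul_conjTranspose_same B
  rwa [conjT_eq_transpose] at this

omit [DecidableEq k] in
lemma eq_zero_of_neg_self_mul_transpose_psd [DecidableEq l] {H : Matrix l k ℝ}
    (h : (-(H * Hᵀ)).PosSemidef) : H = 0 := by
  have hz : ∀ x : l → ℝ, Hᵀ *ᵥ x = 0 := by
    intro x
    have h1 : 0 ≤ star x ⬝ᵥ ((-(H * Hᵀ)) *ᵥ x) := h.dotProduct_mulVec_nonneg x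
    have h2 : star x ⬝ᵥ ((-(H * Hᵀ)) *ᵥ x) = -((Hᵀ *ᵥ x) ⬝ᵥ (Hᵀ *ᵥ x)) := by
      rw [star_trivial, neg_mulVec, dotProduct_neg, ← mulVec_mulVec, dotProduct_mulVec,
        ← mulVec_transpose]
    rw [h2, le_neg, neg_zero] at h1
    have hnn : 0 ≤ (Hᵀ *ᵥ x) ⬝ᵥ (Hᵀ *ᵥ x) := Finset.sum_nonneg fun i _ => mul_self_nonneg _
    exact dotProduct_self_eq_zero.mp (le_antisymm h1 hnn)
  ext i j
  have := congrFun (hz (Pi.single i 1)) j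
  simpa [mulVec, dotProduct, Pi.single_apply] using this

/-- Douglas-type lemma: if `G Gᵀ ⪯ S` then `G = √S M` with `M Mᵀ ⪯ 1`. -/
lemma douglas {S : Matrix k k ℝ} (hS : S.PosSemidef) (G : Matrix k l ℝ)
    (h : (S - G * Gᵀ).PosSemidef) :
    ∃ M : Matrix k l ℝ, ((1 : Matrix k k ℝ) - M * Mᵀ).PosSemidef ∧ msqrt S * M = G := by
  obtain ⟨U, e, hU1, hU2, he, hSspec, hKspec, hCspec, hWspec⟩ := spectral_package hS
  set Q : Matrix k k ℝ := U * diagonal (fun i => e i * (e i)⁻¹) * star U with hQdef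
  have hQt : Qᵀ = Q := UDsymm _ (diagonal_transpose _)
  have hQS : Q * S = S := by
    rw [hQdef, hSspec, UDmul hU1]
    rw [show (fun i => e i * (e i)⁻¹ * e i) = e from
      funext fun i => by by_cases h0 : e i = 0 <;> field_simp [h0]]
  have hWSW : msqrt (pinv S) * S * (msqrt (pinv S))ᵀ = Q := by
    rw [hWspec, UDsymm _ (diagonal_transpose _), hSspec]
    simp only [UDmul hU1]
    rw [show (fun i => Real.sqrt ((e i)⁻¹) * e i * Real.sqrt ((e i)⁻¹))
        = fun i => e i * (e i)⁻¹ from funext fun i => ?_]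
    by_cases h0 : e i = 0
    · simp [h0]
    · rw [show Real.sqrt ((e i)⁻¹) * e i * Real.sqrt ((e i)⁻¹)
        = (Real.sqrt ((e i)⁻¹) * Real.sqrt ((e i)⁻¹)) * e i from by ring,
        Real.mul_self_sqrt (inv_nonneg.mpr (he i))]
      field_simp [h0]
  have hsqrtW : msqrt S * msqrt (pinv S) = Q := by
    rw [hCspec, hWspec]
    simp only [UDmul hU1]
    rw [show (fun i => Real.sqrt (e i) * Real.sqrt ((e i)⁻¹))
        = fun i => e i * (e i)⁻¹ from funext fun i => ?_]
    by_cases h0 : e i = 0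
    · simp [h0]
    · have hpos : 0 < e i := lt_of_le_of_ne (he i) (Ne.symm h0)
      rw [Real.sqrt_inv, mul_inv_cancel₀ (by positivity : Real.sqrt (e i) ≠ 0)]
      field_simp [h0]
  have h1Q : ((1 : Matrix k k ℝ) - Q).PosSemidef := by
    have h1 : (1 : Matrix k k ℝ) = U * diagonal (fun _ => (1:ℝ)) * star U := by
      rw [diagonal_one, mul_one, hU2]
    rw [h1, hQdef, show U * diagonal (fun _ => (1:ℝ)) * star U
        - U * diagonal (fun i => e i * (e i)⁻¹) * star U
        = U * (diagonal (fun _ => (1:ℝ)) - diagonal (fun i => e i * (e i)⁻¹)) * star U from by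
      rw [Matrix.mul_sub, Matrix.sub_mul], diagonal_sub]
    refine UDpsd fun i => ?_
    by_cases h0 : e i = 0 <;> simp [h0]
  -- (1 - Q) * G = 0
  have hQG : ((1 : Matrix k k ℝ) - Q) * G = 0 := by
    apply eq_zero_of_neg_self_mul_transpose_psd
    have hz : ((1 : Matrix k k ℝ) - Q) * S = 0 := by
      rw [Matrix.sub_mul, one_mul, hQS, sub_self]
    have hexp : ((1 : Matrix k k ℝ) - Q) * (S - G * Gᵀ) * ((1 : Matrix k k ℝ) - Q)ᵀ
        = -((((1 : Matrix k k ℝ) - Q) * G) * (((1 : Matrix k k ℝ) - Q) * G)ᵀ) := by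
      calc ((1 : Matrix k k ℝ) - Q) * (S - G * Gᵀ) * ((1 : Matrix k k ℝ) - Q)ᵀ
          = ((1 : Matrix k k ℝ) - Q) * S * ((1 : Matrix k k ℝ) - Q)ᵀ
            - ((1 : Matrix k k ℝ) - Q) * (G * Gᵀ) * ((1 : Matrix k k ℝ) - Q)ᵀ := by
            rw [Matrix.mul_sub, Matrix.sub_mul]
        _ = - (((1 : Matrix k k ℝ) - Q) * (G * Gᵀ) * ((1 : Matrix k k ℝ) - Q)ᵀ) := by
            rw [hz, Matrix.zero_mul, zero_sub]
        _ = -((((1 : Matrix k k ℝ) - Q) * G) * (((1 : Matrix k k ℝ) - Q) * G)ᵀ) := by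
            rw [transpose_mul]; simp only [Matrix.mul_assoc]
    rw [← hexp]
    exact psd_conj h _
  have hG : Q * G = G := by
    have h0 : G - Q * G = 0 := by rw [← hQG, Matrix.sub_mul, Matrix.one_mul]
    exact (sub_eq_zero.mp h0).symm
  refine ⟨msqrt (pinv S) * G, ?_, by rw [← Matrix.mul_assoc, hsqrtW, hG]⟩
  have hWt : (msqrt (pinv S))ᵀ = msqrt (pinv S) := by
    rw [hWspec]; exact UDsymm _ (diagonal_transpose _)
  have hsplit : (1 : Matrix k k ℝ) - (msqrt (pinv S) * G) * (msqrt (pinv S) * G)ᵀ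
      = ((1 : Matrix k k ℝ) - Q) + msqrt (pinv S) * (S - G * Gᵀ) * (msqrt (pinv S))ᵀ := by
    rw [Matrix.mul_sub, Matrix.sub_mul, hWSW, transpose_mul, hWt]
    simp only [Matrix.mul_assoc]
    abel
  rw [hsplit]
  exact h1Q.add (psd_conj h (msqrt (pinv S)))

/-- quadratic form block formula -/
lemma quad_formula {q r : Type*} [Fintype q] [Fintype r] [DecidableEq q]
    (N : Matrix (q ⊕ r) (q ⊕ r) ℝ) (Z : Matrix r q ℝ) :
    (fromRows (1 : Matrix q q ℝ) Z)ᵀ * N * fromRows (1 : Matrix q q ℝ) Z =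
      N.toBlocks₁₁ + N.toBlocks₁₂ * Z + Zᵀ * N.toBlocks₂₁ + Zᵀ * (N.toBlocks₂₂ * Z) := by
  conv_lhs => rw [← fromBlocks_toBlocks N]
  rw [Matrix.mul_assoc, fromBlocks_mul_fromRows, transpose_fromRows, transpose_one,
    fromCols_mul_fromRows]
  simp only [Matrix.mul_add, Matrix.mul_one, one_mul]
  abel

end AuxMP
namespace AuxMP
open Matrix

set_option maxHeartbeats 1000000 in
theorem key_iff {nh T : ℕ} {ι κ : Type*} [Fintype ι] [Fintype κ]
    (Φ : Matrix (Fin nh ⊕ Fin T) (Fin nh ⊕ Fin T) ℝ) (hΦ : Φ ∈ PiSet (Fin nh) (Fin T))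
    (Y : Matrix ι κ ℝ) (XX : Matrix κ (Fin T) ℝ) (E : Matrix κ (Fin nh) ℝ) :
    (∃ Δh : Matrix (Fin nh) (Fin T) ℝ, Δhᵀ ∈ ZSet Φ ∧ Y * XX = Y * (E * Δh)) ↔
      ((∃ M1 : Matrix (Fin nh) (Fin T) ℝ,
          ((1 : Matrix (Fin nh) (Fin nh) ℝ) - M1 * M1ᵀ).PosSemidef ∧
          Y * (XX - E * ΔhatR Φ M1) * Φ.toBlocks₂₂ = 0) ∧
       (∃ M2 : Matrix (Fin nh) (Fin T) ℝ, Y * (XX - E * ΔhatN Φ M2) *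
          ((1 : Matrix (Fin T) (Fin T) ℝ) - Φ.toBlocks₂₂ * pinv Φ.toBlocks₂₂) = 0)) := by
  classical
  obtain ⟨hsym, hB2psd, hker, hSpsd⟩ := hΦ
  obtain ⟨U, d, hU1, hU2, hd, hB2s, hKs, hCs, hDs⟩ := spectral_package hB2psd
  -- notation-level abbreviations (all definitional, kept as full terms in statements)
  have hneg : ∀ f : Fin T → ℝ, -(U * diagonal f * star U)
      = U * diagonal (fun i => -(f i)) * star U := by
    intro f
    rw [← diagonal_neg, Matrix.mul_neg, Matrix.neg_mul]
  have hΦ22 : Φ.toBlocks₂₂ = U * diagonal (fun i => -(d i)) * star U := by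
    have h1 : Φ.toBlocks₂₂ = -(-(Φ.toBlocks₂₂)) := (neg_neg _).symm
    rw [h1, hB2s, hneg]
  have hΦ22t : (Φ.toBlocks₂₂)ᵀ = Φ.toBlocks₂₂ := by
    rw [hΦ22]; exact UDsymm _ (diagonal_transpose _)
  have hKn : pinv Φ.toBlocks₂₂ = U * diagonal (fun i => (-(d i))⁻¹) * star U :=
    pinv_of_UD hU1 _ hΦ22
  have hKnt : (pinv Φ.toBlocks₂₂)ᵀ = pinv Φ.toBlocks₂₂ := by
    rw [hKn]; exact UDsymm _ (diagonal_transpose _)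
  have hPP : Φ.toBlocks₂₂ * pinv Φ.toBlocks₂₂
      = U * diagonal (fun i => d i * (d i)⁻¹) * star U := by
    rw [hKn, hΦ22, UDmul hU1]
    rw [show (fun i => -(d i) * (-(d i))⁻¹) = fun i => d i * (d i)⁻¹ from
      funext fun i => by by_cases h0 : d i = 0 <;> field_simp [h0]]
  have hPPt : (Φ.toBlocks₂₂ * pinv Φ.toBlocks₂₂)ᵀ = Φ.toBlocks₂₂ * pinv Φ.toBlocks₂₂ := by
    rw [hPP]; exact UDsymm _ (diagonal_transpose _)
  have hKnΦ : pinv Φ.toBlocks₂₂ * Φ.toBlocks₂₂ = Φ.toBlocks₂₂ * pinv Φ.toBlocks₂₂ := by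
    rw [hPP, hKn, hΦ22, UDmul hU1]
    rw [show (fun i => (-(d i))⁻¹ * -(d i)) = fun i => d i * (d i)⁻¹ from
      funext fun i => by by_cases h0 : d i = 0 <;> field_simp [h0]]
  have hΦPP : Φ.toBlocks₂₂ * (Φ.toBlocks₂₂ * pinv Φ.toBlocks₂₂) = Φ.toBlocks₂₂ := by
    rw [hPP, hΦ22, UDmul hU1]
    rw [show (fun i => -(d i) * (d i * (d i)⁻¹)) = fun i => -(d i) from
      funext fun i => by by_cases h0 : d i = 0 <;> field_simp [h0]]
  have hPPΦ : (Φ.toBlocks₂₂ * pinv Φ.toBlocks₂₂) * Φ.toBlocks₂₂ = Φ.toBlocks₂₂ := by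
    rw [hPP, hΦ22, UDmul hU1]
    rw [show (fun i => d i * (d i)⁻¹ * -(d i)) = fun i => -(d i) from
      funext fun i => by by_cases h0 : d i = 0 <;> field_simp [h0]]
  have hKnPP : pinv Φ.toBlocks₂₂ * (Φ.toBlocks₂₂ * pinv Φ.toBlocks₂₂) = pinv Φ.toBlocks₂₂ := by
    rw [hPP, hKn, UDmul hU1]
    rw [show (fun i => (-(d i))⁻¹ * (d i * (d i)⁻¹)) = fun i => (-(d i))⁻¹ from
      funext fun i => by by_cases h0 : d i = 0 <;> field_simp [h0]]
  have hPP2 : (Φ.toBlocks₂₂ * pinv Φ.toBlocks₂₂) * (Φ.toBlocks₂₂ * pinv Φ.toBlocks₂₂)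
      = Φ.toBlocks₂₂ * pinv Φ.toBlocks₂₂ := by
    rw [hPP, UDmul hU1]
    rw [show (fun i => d i * (d i)⁻¹ * (d i * (d i)⁻¹)) = fun i => d i * (d i)⁻¹ from
      funext fun i => by by_cases h0 : d i = 0 <;> field_simp [h0]]
  have h1PP2 : ((1 : Matrix (Fin T) (Fin T) ℝ) - Φ.toBlocks₂₂ * pinv Φ.toBlocks₂₂)
      * ((1 : Matrix (Fin T) (Fin T) ℝ) - Φ.toBlocks₂₂ * pinv Φ.toBlocks₂₂)
      = (1 : Matrix (Fin T) (Fin T) ℝ) - Φ.toBlocks₂₂ * pinv Φ.toBlocks₂₂ := by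
    rw [Matrix.mul_sub, Matrix.mul_one, Matrix.sub_mul, Matrix.one_mul, hPP2]
    abel
  have h1PPt : ((1 : Matrix (Fin T) (Fin T) ℝ) - Φ.toBlocks₂₂ * pinv Φ.toBlocks₂₂)ᵀ
      = (1 : Matrix (Fin T) (Fin T) ℝ) - Φ.toBlocks₂₂ * pinv Φ.toBlocks₂₂ := by
    rw [transpose_sub, transpose_one, hPPt]
  have h1PPpsd : ((1 : Matrix (Fin T) (Fin T) ℝ)
      - Φ.toBlocks₂₂ * pinv Φ.toBlocks₂₂).PosSemidef := by
    have h1 : (1 : Matrix (Fin T) (Fin T) ℝ) = U * diagonal (fun _ => (1:ℝ)) * star U := by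
      rw [diagonal_one, Matrix.mul_one, hU2]
    rw [h1, hPP, show U * diagonal (fun _ => (1:ℝ)) * star U
        - U * diagonal (fun i => d i * (d i)⁻¹) * star U
        = U * (diagonal (fun _ => (1:ℝ)) - diagonal (fun i => d i * (d i)⁻¹)) * star U from by
      rw [Matrix.mul_sub, Matrix.sub_mul], diagonal_sub]
    refine UDpsd fun i => ?_
    by_cases h0 : d i = 0 <;> simp [h0]
  -- sqrt facts for B2 := -Φ₂₂
  have hCC : msqrt (-(Φ.toBlocks₂₂)) * msqrt (-(Φ.toBlocks₂₂)) = -(Φ.toBlocks₂₂) := by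
    rw [hCs, UDmul hU1]
    rw [show (fun i => Real.sqrt (d i) * Real.sqrt (d i)) = d from
      funext fun i => Real.mul_self_sqrt (hd i), ← hB2s]
  have hD't : (msqrt (pinv (-(Φ.toBlocks₂₂))))ᵀ = msqrt (pinv (-(Φ.toBlocks₂₂))) := by
    rw [hDs]; exact UDsymm _ (diagonal_transpose _)
  have hD'Φ : msqrt (pinv (-(Φ.toBlocks₂₂))) * Φ.toBlocks₂₂ = -(msqrt (-(Φ.toBlocks₂₂))) := by
    rw [hDs, hCs, hΦ22, UDmul hU1, hneg]
    rw [show (fun i => Real.sqrt ((d i)⁻¹) * -(d i)) = fun i => -(Real.sqrt (d i)) from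
      funext fun i => ?_]
    by_cases h0 : d i = 0
    · simp [h0]
    · have hpos : 0 < d i := lt_of_le_of_ne (hd i) (Ne.symm h0)
      have hs : Real.sqrt (d i) ≠ 0 := by positivity
      rw [Real.sqrt_inv, inv_mul_eq_div, div_eq_iff hs, neg_mul, Real.mul_self_sqrt (hd i)]
  have hD'PP : msqrt (pinv (-(Φ.toBlocks₂₂))) * (Φ.toBlocks₂₂ * pinv Φ.toBlocks₂₂)
      = msqrt (pinv (-(Φ.toBlocks₂₂))) := by
    rw [hDs, hPP, UDmul hU1]
    rw [show (fun i => Real.sqrt ((d i)⁻¹) * (d i * (d i)⁻¹)) = fun i => Real.sqrt ((d i)⁻¹) from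
      funext fun i => by by_cases h0 : d i = 0 <;> [simp [h0]; field_simp [h0]]]
  have hD'ΦD' : msqrt (pinv (-(Φ.toBlocks₂₂))) * Φ.toBlocks₂₂ * msqrt (pinv (-(Φ.toBlocks₂₂)))
      = -(Φ.toBlocks₂₂ * pinv Φ.toBlocks₂₂) := by
    rw [hDs, hPP, hΦ22, UDmul hU1, UDmul hU1, hneg]
    rw [show (fun i => Real.sqrt ((d i)⁻¹) * -(d i) * Real.sqrt ((d i)⁻¹))
        = fun i => -(d i * (d i)⁻¹) from funext fun i => ?_]
    by_cases h0 : d i = 0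
    · simp [h0]
    · rw [show Real.sqrt ((d i)⁻¹) * -(d i) * Real.sqrt ((d i)⁻¹)
        = -((Real.sqrt ((d i)⁻¹) * Real.sqrt ((d i)⁻¹)) * d i) from by ring,
        Real.mul_self_sqrt (inv_nonneg.mpr (hd i))]
      field_simp [h0]
  -- sqrt facts for S
  obtain ⟨V, v, hV1, hV2, hv, hSs, _, hRSs, _⟩ := spectral_package hSpsd
  have hSt : (msqrt (Φ.toBlocks₁₁ - Φ.toBlocks₁₂ * pinv Φ.toBlocks₂₂ * (Φ.toBlocks₁₂)ᵀ))ᵀ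
      = msqrt (Φ.toBlocks₁₁ - Φ.toBlocks₁₂ * pinv Φ.toBlocks₂₂ * (Φ.toBlocks₁₂)ᵀ) := by
    rw [hRSs]; exact UDsymm _ (diagonal_transpose _)
  have hSS : msqrt (Φ.toBlocks₁₁ - Φ.toBlocks₁₂ * pinv Φ.toBlocks₂₂ * (Φ.toBlocks₁₂)ᵀ)
      * msqrt (Φ.toBlocks₁₁ - Φ.toBlocks₁₂ * pinv Φ.toBlocks₂₂ * (Φ.toBlocks₁₂)ᵀ)
      = Φ.toBlocks₁₁ - Φ.toBlocks₁₂ * pinv Φ.toBlocks₂₂ * (Φ.toBlocks₁₂)ᵀ := by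
    rw [hRSs, UDmul hV1]
    rw [show (fun i => Real.sqrt (v i) * Real.sqrt (v i)) = v from
      funext fun i => Real.mul_self_sqrt (hv i), ← hSs]
  -- kernel condition as a matrix identity
  have hΦKΦ : Φ.toBlocks₂₂ * pinv Φ.toBlocks₂₂ * Φ.toBlocks₂₂ = Φ.toBlocks₂₂ := hPPΦ
  have hFzero : Φ.toBlocks₁₂ * ((1 : Matrix (Fin T) (Fin T) ℝ)
      - pinv Φ.toBlocks₂₂ * Φ.toBlocks₂₂) = 0 := by
    have hzero : Φ.toBlocks₂₂ * ((1 : Matrix (Fin T) (Fin T) ℝ)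
        - pinv Φ.toBlocks₂₂ * Φ.toBlocks₂₂) = 0 := by
      rw [Matrix.mul_sub, Matrix.mul_one, ← Matrix.mul_assoc, hΦKΦ]
      · abel
    ext i j
    have hcol : Φ.toBlocks₂₂ *ᵥ (fun t0 => ((1 : Matrix (Fin T) (Fin T) ℝ)
        - pinv Φ.toBlocks₂₂ * Φ.toBlocks₂₂) t0 j) = 0 := by
      funext i0
      simpa [Matrix.mulVec, dotProduct, Matrix.mul_apply] using
        congrFun (congrFun hzero i0) j
    have := hker _ hcol
    simpa [Matrix.mulVec, dotProduct, Matrix.mul_apply] using congrFun this i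
  have hFKΦ : Φ.toBlocks₁₂ * pinv Φ.toBlocks₂₂ * Φ.toBlocks₂₂ = Φ.toBlocks₁₂ := by
    have h0 : Φ.toBlocks₁₂ - Φ.toBlocks₁₂ * (pinv Φ.toBlocks₂₂ * Φ.toBlocks₂₂) = 0 := by
      have h1 := hFzero
      rw [Matrix.mul_sub, Matrix.mul_one] at h1
      exact h1
    rw [Matrix.mul_assoc]
    exact (sub_eq_zero.mp h0).symm
  have hΦKF : Φ.toBlocks₂₂ * (pinv Φ.toBlocks₂₂ * (Φ.toBlocks₁₂)ᵀ) = (Φ.toBlocks₁₂)ᵀ := by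
    have := congrArg transpose hFKΦ
    rw [transpose_mul, transpose_mul, hΦ22t, hKnt] at this
    exact this
  have hFPP : Φ.toBlocks₁₂ * (Φ.toBlocks₂₂ * pinv Φ.toBlocks₂₂) = Φ.toBlocks₁₂ := by
    rw [← hKnΦ, ← Matrix.mul_assoc, hFKΦ]
  -- ZSet membership characterization
  have hZmem : ∀ Δ : Matrix (Fin nh) (Fin T) ℝ, (Δᵀ ∈ ZSet Φ) ↔
      (Φ.toBlocks₁₁ + Φ.toBlocks₁₂ * Δᵀ + Δ * (Φ.toBlocks₁₂)ᵀ
        + Δ * (Φ.toBlocks₂₂ * Δᵀ)).PosSemidef := by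
    intro Δ
    have h21 : Φ.toBlocks₂₁ = (Φ.toBlocks₁₂)ᵀ := by
      ext i j
      exact (hsym.apply (Sum.inr i) (Sum.inl j)).symm
    rw [ZSet, Set.mem_setOf_eq, quad_formula, transpose_transpose, h21]
  -- key algebraic identity
  have hkeyGen : ∀ Δ : Matrix (Fin nh) (Fin T) ℝ,
      Φ.toBlocks₁₁ + Φ.toBlocks₁₂ * Δᵀ + Δ * (Φ.toBlocks₁₂)ᵀ + Δ * (Φ.toBlocks₂₂ * Δᵀ)
      = (Φ.toBlocks₁₁ - Φ.toBlocks₁₂ * pinv Φ.toBlocks₂₂ * (Φ.toBlocks₁₂)ᵀ)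
        + (Δ + Φ.toBlocks₁₂ * pinv Φ.toBlocks₂₂) * Φ.toBlocks₂₂
          * (Δ + Φ.toBlocks₁₂ * pinv Φ.toBlocks₂₂)ᵀ := by
    intro Δ
    rw [transpose_add, transpose_mul, hKnt]
    simp only [Matrix.add_mul, Matrix.mul_add]
    rw [show (Δ * Φ.toBlocks₂₂) * (pinv Φ.toBlocks₂₂ * (Φ.toBlocks₁₂)ᵀ)
        = Δ * (Φ.toBlocks₂₂ * (pinv Φ.toBlocks₂₂ * (Φ.toBlocks₁₂)ᵀ)) from by
      simp only [Matrix.mul_assoc], hΦKF]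
    rw [show Φ.toBlocks₁₂ * pinv Φ.toBlocks₂₂ * Φ.toBlocks₂₂ * Δᵀ = Φ.toBlocks₁₂ * Δᵀ from by
      rw [hFKΦ]]
    rw [show Φ.toBlocks₁₂ * pinv Φ.toBlocks₂₂ * Φ.toBlocks₂₂
          * (pinv Φ.toBlocks₂₂ * (Φ.toBlocks₁₂)ᵀ)
        = Φ.toBlocks₁₂ * pinv Φ.toBlocks₂₂ * (Φ.toBlocks₁₂)ᵀ from by
      rw [hFKΦ, Matrix.mul_assoc]]
    rw [show Δ * Φ.toBlocks₂₂ * Δᵀ = Δ * (Φ.toBlocks₂₂ * Δᵀ) from by rw [Matrix.mul_assoc]]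
    abel
  have hCt : (msqrt (-(Φ.toBlocks₂₂)))ᵀ = msqrt (-(Φ.toBlocks₂₂)) := by
    rw [hCs]; exact UDsymm _ (diagonal_transpose _)
  have h1PPPP : ((1 : Matrix (Fin T) (Fin T) ℝ) - Φ.toBlocks₂₂ * pinv Φ.toBlocks₂₂)
      * (Φ.toBlocks₂₂ * pinv Φ.toBlocks₂₂) = 0 := by
    rw [Matrix.sub_mul, Matrix.one_mul, hPP2, sub_self]
  constructor
  · rintro ⟨Δh, hZ, hYX⟩
    rw [hZmem Δh] at hZ
    have hz : Y * (XX - E * Δh) = 0 := by rw [Matrix.mul_sub, hYX, sub_self]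
    have hGGt : ((Δh + Φ.toBlocks₁₂ * pinv Φ.toBlocks₂₂) * msqrt (-(Φ.toBlocks₂₂)))
        * ((Δh + Φ.toBlocks₁₂ * pinv Φ.toBlocks₂₂) * msqrt (-(Φ.toBlocks₂₂)))ᵀ
        = -((Δh + Φ.toBlocks₁₂ * pinv Φ.toBlocks₂₂) * Φ.toBlocks₂₂
            * (Δh + Φ.toBlocks₁₂ * pinv Φ.toBlocks₂₂)ᵀ) := by
      rw [transpose_mul, hCt]
      rw [show (Δh + Φ.toBlocks₁₂ * pinv Φ.toBlocks₂₂) * msqrt (-(Φ.toBlocks₂₂))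
          * (msqrt (-(Φ.toBlocks₂₂)) * (Δh + Φ.toBlocks₁₂ * pinv Φ.toBlocks₂₂)ᵀ)
          = (Δh + Φ.toBlocks₁₂ * pinv Φ.toBlocks₂₂)
            * (msqrt (-(Φ.toBlocks₂₂)) * msqrt (-(Φ.toBlocks₂₂)))
            * (Δh + Φ.toBlocks₁₂ * pinv Φ.toBlocks₂₂)ᵀ from by simp only [Matrix.mul_assoc]]
      rw [hCC, Matrix.mul_neg, Matrix.neg_mul]
    have hpsd2 : ((Φ.toBlocks₁₁ - Φ.toBlocks₁₂ * pinv Φ.toBlocks₂₂ * (Φ.toBlocks₁₂)ᵀ)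
        - ((Δh + Φ.toBlocks₁₂ * pinv Φ.toBlocks₂₂) * msqrt (-(Φ.toBlocks₂₂)))
          * ((Δh + Φ.toBlocks₁₂ * pinv Φ.toBlocks₂₂) * msqrt (-(Φ.toBlocks₂₂)))ᵀ).PosSemidef := by
      rw [hGGt, sub_neg_eq_add, ← hkeyGen Δh]
      exact hZ
    obtain ⟨M1, hM1, hGM⟩ := douglas hSpsd _ hpsd2
    constructor
    · refine ⟨M1, hM1, ?_⟩
      have hb : msqrt (Φ.toBlocks₁₁ - Φ.toBlocks₁₂ * pinv Φ.toBlocks₂₂ * (Φ.toBlocks₁₂)ᵀ)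
            * M1 * msqrt (pinv (-(Φ.toBlocks₂₂))) * Φ.toBlocks₂₂
          = (Δh + Φ.toBlocks₁₂ * pinv Φ.toBlocks₂₂) * Φ.toBlocks₂₂ := by
        calc msqrt (Φ.toBlocks₁₁ - Φ.toBlocks₁₂ * pinv Φ.toBlocks₂₂ * (Φ.toBlocks₁₂)ᵀ)
              * M1 * msqrt (pinv (-(Φ.toBlocks₂₂))) * Φ.toBlocks₂₂
            = msqrt (Φ.toBlocks₁₁ - Φ.toBlocks₁₂ * pinv Φ.toBlocks₂₂ * (Φ.toBlocks₁₂)ᵀ)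
              * M1 * (msqrt (pinv (-(Φ.toBlocks₂₂))) * Φ.toBlocks₂₂) := by
              rw [Matrix.mul_assoc]
          _ = -(msqrt (Φ.toBlocks₁₁ - Φ.toBlocks₁₂ * pinv Φ.toBlocks₂₂ * (Φ.toBlocks₁₂)ᵀ)
              * M1 * msqrt (-(Φ.toBlocks₂₂))) := by rw [hD'Φ, Matrix.mul_neg]
          _ = -((Δh + Φ.toBlocks₁₂ * pinv Φ.toBlocks₂₂) * msqrt (-(Φ.toBlocks₂₂))
              * msqrt (-(Φ.toBlocks₂₂))) := by rw [hGM]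
          _ = -((Δh + Φ.toBlocks₁₂ * pinv Φ.toBlocks₂₂)
              * (msqrt (-(Φ.toBlocks₂₂)) * msqrt (-(Φ.toBlocks₂₂)))) := by
              rw [Matrix.mul_assoc]
          _ = (Δh + Φ.toBlocks₁₂ * pinv Φ.toBlocks₂₂) * Φ.toBlocks₂₂ := by
              rw [hCC, Matrix.mul_neg, neg_neg]
      have hRΦ : ΔhatR Φ M1 * Φ.toBlocks₂₂ = Δh * Φ.toBlocks₂₂ := by
        simp only [ΔhatR]
        rw [Matrix.add_mul, Matrix.neg_mul, hFKΦ, hb, Matrix.add_mul, hFKΦ]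
        abel
      have hstep : (XX - E * ΔhatR Φ M1) * Φ.toBlocks₂₂ = (XX - E * Δh) * Φ.toBlocks₂₂ := by
        rw [Matrix.sub_mul, Matrix.sub_mul, Matrix.mul_assoc, Matrix.mul_assoc, hRΦ]
      rw [Matrix.mul_assoc, hstep, ← Matrix.mul_assoc, hz, Matrix.zero_mul]
    · refine ⟨Δh, ?_⟩
      have hNΦ : ΔhatN Φ Δh * ((1 : Matrix (Fin T) (Fin T) ℝ)
            - Φ.toBlocks₂₂ * pinv Φ.toBlocks₂₂)
          = Δh * ((1 : Matrix (Fin T) (Fin T) ℝ) - Φ.toBlocks₂₂ * pinv Φ.toBlocks₂₂) := by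
        simp only [ΔhatN]; rw [Matrix.mul_assoc, h1PP2]
      have hstep : (XX - E * ΔhatN Φ Δh) * ((1 : Matrix (Fin T) (Fin T) ℝ)
            - Φ.toBlocks₂₂ * pinv Φ.toBlocks₂₂)
          = (XX - E * Δh) * ((1 : Matrix (Fin T) (Fin T) ℝ)
            - Φ.toBlocks₂₂ * pinv Φ.toBlocks₂₂) := by
        rw [Matrix.sub_mul, Matrix.sub_mul, Matrix.mul_assoc, Matrix.mul_assoc, hNΦ]
      rw [Matrix.mul_assoc, hstep, ← Matrix.mul_assoc, hz, Matrix.zero_mul]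
  · rintro ⟨⟨M1, hM1, eqR⟩, M2, eqN⟩
    have hRPP : ΔhatR Φ M1 * (Φ.toBlocks₂₂ * pinv Φ.toBlocks₂₂) = ΔhatR Φ M1 := by
      simp only [ΔhatR]
      rw [Matrix.add_mul, Matrix.neg_mul, Matrix.mul_assoc Φ.toBlocks₁₂, hKnPP,
        Matrix.mul_assoc (msqrt (Φ.toBlocks₁₁ - Φ.toBlocks₁₂ * pinv Φ.toBlocks₂₂
          * (Φ.toBlocks₁₂)ᵀ) * M1), hD'PP]
    have hR1P : ΔhatR Φ M1 * ((1 : Matrix (Fin T) (Fin T) ℝ)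
        - Φ.toBlocks₂₂ * pinv Φ.toBlocks₂₂) = 0 := by
      rw [Matrix.mul_sub, Matrix.mul_one, hRPP, sub_self]
    have hΔPP : (ΔhatR Φ M1 + M2 * ((1 : Matrix (Fin T) (Fin T) ℝ)
          - Φ.toBlocks₂₂ * pinv Φ.toBlocks₂₂)) * (Φ.toBlocks₂₂ * pinv Φ.toBlocks₂₂)
        = ΔhatR Φ M1 := by
      rw [Matrix.add_mul, hRPP, Matrix.mul_assoc, h1PPPP, Matrix.mul_zero, add_zero]
    have hΔ1P : (ΔhatR Φ M1 + M2 * ((1 : Matrix (Fin T) (Fin T) ℝ)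
          - Φ.toBlocks₂₂ * pinv Φ.toBlocks₂₂))
          * ((1 : Matrix (Fin T) (Fin T) ℝ) - Φ.toBlocks₂₂ * pinv Φ.toBlocks₂₂)
        = M2 * ((1 : Matrix (Fin T) (Fin T) ℝ) - Φ.toBlocks₂₂ * pinv Φ.toBlocks₂₂) := by
      rw [Matrix.add_mul, hR1P, Matrix.mul_assoc, h1PP2, zero_add]
    refine ⟨ΔhatR Φ M1 + M2 * ((1 : Matrix (Fin T) (Fin T) ℝ)
      - Φ.toBlocks₂₂ * pinv Φ.toBlocks₂₂), ?_, ?_⟩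
    · rw [hZmem]
      have hF1P : Φ.toBlocks₁₂ * ((1 : Matrix (Fin T) (Fin T) ℝ)
          - Φ.toBlocks₂₂ * pinv Φ.toBlocks₂₂) = 0 := by
        rw [Matrix.mul_sub, Matrix.mul_one, hFPP, sub_self]
      have h1PFt : ((1 : Matrix (Fin T) (Fin T) ℝ) - Φ.toBlocks₂₂ * pinv Φ.toBlocks₂₂)
          * (Φ.toBlocks₁₂)ᵀ = 0 := by
        have h := congrArg transpose hF1P
        rw [transpose_mul, h1PPt, transpose_zero] at h
        exact h
      have hΦ1P : Φ.toBlocks₂₂ * ((1 : Matrix (Fin T) (Fin T) ℝ)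
          - Φ.toBlocks₂₂ * pinv Φ.toBlocks₂₂) = 0 := by
        rw [Matrix.mul_sub, Matrix.mul_one, hΦPP, sub_self]
      have h1PΦ : ((1 : Matrix (Fin T) (Fin T) ℝ) - Φ.toBlocks₂₂ * pinv Φ.toBlocks₂₂)
          * Φ.toBlocks₂₂ = 0 := by
        rw [Matrix.sub_mul, Matrix.one_mul, hPPΦ, sub_self]
      have hΔt : (ΔhatR Φ M1 + M2 * ((1 : Matrix (Fin T) (Fin T) ℝ)
            - Φ.toBlocks₂₂ * pinv Φ.toBlocks₂₂))ᵀ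
          = (ΔhatR Φ M1)ᵀ + ((1 : Matrix (Fin T) (Fin T) ℝ)
            - Φ.toBlocks₂₂ * pinv Φ.toBlocks₂₂) * M2ᵀ := by
        rw [transpose_add, transpose_mul, h1PPt]
      have e1 : Φ.toBlocks₁₂ * (ΔhatR Φ M1 + M2 * ((1 : Matrix (Fin T) (Fin T) ℝ)
            - Φ.toBlocks₂₂ * pinv Φ.toBlocks₂₂))ᵀ = Φ.toBlocks₁₂ * (ΔhatR Φ M1)ᵀ := by
        rw [hΔt, Matrix.mul_add, ← Matrix.mul_assoc, hF1P, Matrix.zero_mul, add_zero]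
      have e2 : (ΔhatR Φ M1 + M2 * ((1 : Matrix (Fin T) (Fin T) ℝ)
            - Φ.toBlocks₂₂ * pinv Φ.toBlocks₂₂)) * (Φ.toBlocks₁₂)ᵀ
          = ΔhatR Φ M1 * (Φ.toBlocks₁₂)ᵀ := by
        rw [Matrix.add_mul, Matrix.mul_assoc, h1PFt, Matrix.mul_zero, add_zero]
      have e3 : Φ.toBlocks₂₂ * (ΔhatR Φ M1 + M2 * ((1 : Matrix (Fin T) (Fin T) ℝ)
            - Φ.toBlocks₂₂ * pinv Φ.toBlocks₂₂))ᵀ = Φ.toBlocks₂₂ * (ΔhatR Φ M1)ᵀ := by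
        rw [hΔt, Matrix.mul_add, ← Matrix.mul_assoc, hΦ1P, Matrix.zero_mul, add_zero]
      have e4 : (ΔhatR Φ M1 + M2 * ((1 : Matrix (Fin T) (Fin T) ℝ)
            - Φ.toBlocks₂₂ * pinv Φ.toBlocks₂₂))
            * (Φ.toBlocks₂₂ * (ΔhatR Φ M1 + M2 * ((1 : Matrix (Fin T) (Fin T) ℝ)
            - Φ.toBlocks₂₂ * pinv Φ.toBlocks₂₂))ᵀ)
          = ΔhatR Φ M1 * (Φ.toBlocks₂₂ * (ΔhatR Φ M1)ᵀ) := by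
        rw [e3, Matrix.add_mul, Matrix.mul_assoc M2, ← Matrix.mul_assoc
          ((1 : Matrix (Fin T) (Fin T) ℝ) - Φ.toBlocks₂₂ * pinv Φ.toBlocks₂₂), h1PΦ,
          Matrix.zero_mul, Matrix.mul_zero, add_zero]
      rw [e1, e2, e4, hkeyGen (ΔhatR Φ M1)]
      have hWR : ΔhatR Φ M1 + Φ.toBlocks₁₂ * pinv Φ.toBlocks₂₂
          = msqrt (Φ.toBlocks₁₁ - Φ.toBlocks₁₂ * pinv Φ.toBlocks₂₂ * (Φ.toBlocks₁₂)ᵀ) * M1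
            * msqrt (pinv (-(Φ.toBlocks₂₂))) := by
        simp only [ΔhatR]; abel
      rw [hWR]
      have hDfull : ∀ Z : Matrix (Fin T) (Fin nh) ℝ,
          msqrt (pinv (-(Φ.toBlocks₂₂))) * (Φ.toBlocks₂₂ * (msqrt (pinv (-(Φ.toBlocks₂₂))) * Z))
          = -((Φ.toBlocks₂₂ * pinv Φ.toBlocks₂₂) * Z) := by
        intro Z
        calc msqrt (pinv (-(Φ.toBlocks₂₂)))
              * (Φ.toBlocks₂₂ * (msqrt (pinv (-(Φ.toBlocks₂₂))) * Z))
            = (msqrt (pinv (-(Φ.toBlocks₂₂))) * Φ.toBlocks₂₂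
                * msqrt (pinv (-(Φ.toBlocks₂₂)))) * Z := by simp only [Matrix.mul_assoc]
          _ = -((Φ.toBlocks₂₂ * pinv Φ.toBlocks₂₂) * Z) := by rw [hD'ΦD', Matrix.neg_mul]
      have hmid : msqrt (Φ.toBlocks₁₁ - Φ.toBlocks₁₂ * pinv Φ.toBlocks₂₂ * (Φ.toBlocks₁₂)ᵀ) * M1
            * msqrt (pinv (-(Φ.toBlocks₂₂))) * Φ.toBlocks₂₂
            * (msqrt (Φ.toBlocks₁₁ - Φ.toBlocks₁₂ * pinv Φ.toBlocks₂₂ * (Φ.toBlocks₁₂)ᵀ) * M1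
            * msqrt (pinv (-(Φ.toBlocks₂₂))))ᵀ
          = -(msqrt (Φ.toBlocks₁₁ - Φ.toBlocks₁₂ * pinv Φ.toBlocks₂₂ * (Φ.toBlocks₁₂)ᵀ)
              * (M1 * ((Φ.toBlocks₂₂ * pinv Φ.toBlocks₂₂)
                * (M1ᵀ * msqrt (Φ.toBlocks₁₁ - Φ.toBlocks₁₂ * pinv Φ.toBlocks₂₂
                  * (Φ.toBlocks₁₂)ᵀ))))) := by
        rw [transpose_mul, transpose_mul, hD't, hSt]
        simp only [Matrix.mul_assoc]
        rw [hDfull, Matrix.mul_neg, Matrix.mul_neg]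
        simp only [Matrix.mul_assoc]
      rw [hmid]
      have hsum : ((1 : Matrix (Fin nh) (Fin nh) ℝ) - M1 * M1ᵀ)
            + M1 * ((1 : Matrix (Fin T) (Fin T) ℝ) - Φ.toBlocks₂₂ * pinv Φ.toBlocks₂₂) * M1ᵀ
          = (1 : Matrix (Fin nh) (Fin nh) ℝ)
            - M1 * ((Φ.toBlocks₂₂ * pinv Φ.toBlocks₂₂) * M1ᵀ) := by
        rw [Matrix.mul_sub, Matrix.mul_one, Matrix.sub_mul]
        simp only [Matrix.mul_assoc]
        abel
      have hfact : (Φ.toBlocks₁₁ - Φ.toBlocks₁₂ * pinv Φ.toBlocks₂₂ * (Φ.toBlocks₁₂)ᵀ)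
            + -(msqrt (Φ.toBlocks₁₁ - Φ.toBlocks₁₂ * pinv Φ.toBlocks₂₂ * (Φ.toBlocks₁₂)ᵀ)
              * (M1 * ((Φ.toBlocks₂₂ * pinv Φ.toBlocks₂₂)
                * (M1ᵀ * msqrt (Φ.toBlocks₁₁ - Φ.toBlocks₁₂ * pinv Φ.toBlocks₂₂
                  * (Φ.toBlocks₁₂)ᵀ)))))
          = msqrt (Φ.toBlocks₁₁ - Φ.toBlocks₁₂ * pinv Φ.toBlocks₂₂ * (Φ.toBlocks₁₂)ᵀ)
            * ((1 : Matrix (Fin nh) (Fin nh) ℝ)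
              - M1 * ((Φ.toBlocks₂₂ * pinv Φ.toBlocks₂₂) * M1ᵀ))
            * (msqrt (Φ.toBlocks₁₁ - Φ.toBlocks₁₂ * pinv Φ.toBlocks₂₂ * (Φ.toBlocks₁₂)ᵀ))ᵀ := by
        rw [hSt, Matrix.mul_sub, Matrix.mul_one, Matrix.sub_mul, hSS]
        simp only [Matrix.mul_assoc]
        abel
      rw [hfact]
      refine psd_conj ?_ _
      rw [← hsum]
      exact hM1.add (psd_conj h1PPpsd M1)
    · -- data consistency
      have hA : Y * (XX - E * (ΔhatR Φ M1 + M2 * ((1 : Matrix (Fin T) (Fin T) ℝ)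
            - Φ.toBlocks₂₂ * pinv Φ.toBlocks₂₂))) * (Φ.toBlocks₂₂ * pinv Φ.toBlocks₂₂) = 0 := by
        have hst : (XX - E * (ΔhatR Φ M1 + M2 * ((1 : Matrix (Fin T) (Fin T) ℝ)
              - Φ.toBlocks₂₂ * pinv Φ.toBlocks₂₂))) * (Φ.toBlocks₂₂ * pinv Φ.toBlocks₂₂)
            = (XX - E * ΔhatR Φ M1) * (Φ.toBlocks₂₂ * pinv Φ.toBlocks₂₂) := by
          rw [Matrix.sub_mul, Matrix.sub_mul, Matrix.mul_assoc, Matrix.mul_assoc, hΔPP, hRPP]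
        calc Y * (XX - E * (ΔhatR Φ M1 + M2 * ((1 : Matrix (Fin T) (Fin T) ℝ)
              - Φ.toBlocks₂₂ * pinv Φ.toBlocks₂₂))) * (Φ.toBlocks₂₂ * pinv Φ.toBlocks₂₂)
            = Y * ((XX - E * ΔhatR Φ M1) * (Φ.toBlocks₂₂ * pinv Φ.toBlocks₂₂)) := by
              rw [Matrix.mul_assoc, hst]
          _ = Y * (XX - E * ΔhatR Φ M1) * Φ.toBlocks₂₂ * pinv Φ.toBlocks₂₂ := by
              simp only [Matrix.mul_assoc]
          _ = 0 := by rw [eqR, Matrix.zero_mul]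
      have hB : Y * (XX - E * (ΔhatR Φ M1 + M2 * ((1 : Matrix (Fin T) (Fin T) ℝ)
            - Φ.toBlocks₂₂ * pinv Φ.toBlocks₂₂)))
          * ((1 : Matrix (Fin T) (Fin T) ℝ) - Φ.toBlocks₂₂ * pinv Φ.toBlocks₂₂) = 0 := by
        have hNeq : ΔhatN Φ M2 * ((1 : Matrix (Fin T) (Fin T) ℝ)
              - Φ.toBlocks₂₂ * pinv Φ.toBlocks₂₂)
            = M2 * ((1 : Matrix (Fin T) (Fin T) ℝ) - Φ.toBlocks₂₂ * pinv Φ.toBlocks₂₂) := by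
          simp only [ΔhatN]; rw [Matrix.mul_assoc, h1PP2]
        have hst : (XX - E * (ΔhatR Φ M1 + M2 * ((1 : Matrix (Fin T) (Fin T) ℝ)
              - Φ.toBlocks₂₂ * pinv Φ.toBlocks₂₂)))
              * ((1 : Matrix (Fin T) (Fin T) ℝ) - Φ.toBlocks₂₂ * pinv Φ.toBlocks₂₂)
            = (XX - E * ΔhatN Φ M2)
              * ((1 : Matrix (Fin T) (Fin T) ℝ) - Φ.toBlocks₂₂ * pinv Φ.toBlocks₂₂) := by
          rw [Matrix.sub_mul, Matrix.sub_mul, Matrix.mul_assoc, Matrix.mul_assoc, hΔ1P, hNeq]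
        calc Y * (XX - E * (ΔhatR Φ M1 + M2 * ((1 : Matrix (Fin T) (Fin T) ℝ)
              - Φ.toBlocks₂₂ * pinv Φ.toBlocks₂₂)))
              * ((1 : Matrix (Fin T) (Fin T) ℝ) - Φ.toBlocks₂₂ * pinv Φ.toBlocks₂₂)
            = Y * ((XX - E * ΔhatN Φ M2)
              * ((1 : Matrix (Fin T) (Fin T) ℝ) - Φ.toBlocks₂₂ * pinv Φ.toBlocks₂₂)) := by
              rw [Matrix.mul_assoc, hst]
          _ = 0 := by rw [← Matrix.mul_assoc, eqN]
      have htot : Y * (XX - E * (ΔhatR Φ M1 + M2 * ((1 : Matrix (Fin T) (Fin T) ℝ)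
          - Φ.toBlocks₂₂ * pinv Φ.toBlocks₂₂))) = 0 := by
        have hsp : Y * (XX - E * (ΔhatR Φ M1 + M2 * ((1 : Matrix (Fin T) (Fin T) ℝ)
              - Φ.toBlocks₂₂ * pinv Φ.toBlocks₂₂)))
            = Y * (XX - E * (ΔhatR Φ M1 + M2 * ((1 : Matrix (Fin T) (Fin T) ℝ)
              - Φ.toBlocks₂₂ * pinv Φ.toBlocks₂₂))) * (Φ.toBlocks₂₂ * pinv Φ.toBlocks₂₂)
              + Y * (XX - E * (ΔhatR Φ M1 + M2 * ((1 : Matrix (Fin T) (Fin T) ℝ)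
              - Φ.toBlocks₂₂ * pinv Φ.toBlocks₂₂)))
              * ((1 : Matrix (Fin T) (Fin T) ℝ) - Φ.toBlocks₂₂ * pinv Φ.toBlocks₂₂) := by
          rw [← Matrix.mul_add, add_sub_cancel, Matrix.mul_one]
        rw [hsp, hA, hB, add_zero]
      rw [Matrix.mul_sub] at htot
      exact sub_eq_zero.mp htot


end AuxMP
end

theorem stmt0 {n m T nh : ℕ} (hn : 0 < n) (hm : 0 < m) (hT : 0 < T) (hnh : 0 < nh)
    (Astar : Matrix (Fin n) (Fin n) ℝ) (Bstar : Matrix (Fin n) (Fin m) ℝ)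
    (Xps Xs Xp X ΔXp ΔX : Matrix (Fin n) (Fin T) ℝ) (Us U ΔU : Matrix (Fin m) (Fin T) ℝ)
    (E : Matrix (SRows n m) (Fin nh) ℝ)
    (Φ : Matrix (Fin nh ⊕ Fin T) (Fin nh ⊕ Fin T) ℝ)
    (hΦ : Φ ∈ PiSet (Fin nh) (Fin T))
    (hclean : Xps = Astar * Xs + Bstar * Us)
    (hXp : Xp = Xps + ΔXp) (hX : X = Xs + ΔX) (hU : U = Us + ΔU)
    (hΔ : bigX ΔXp ΔX ΔU ∈ Dset E Φ) :
    (∀ (A : Matrix (Fin n) (Fin n) ℝ) (B : Matrix (Fin n) (Fin m) ℝ),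
      (A, B) ∈ SigmaSet Xp X U E Φ ↔
        ∃ M1 M2 : Matrix (Fin nh) (Fin T) ℝ,
          ((1 : Matrix (Fin nh) (Fin nh) ℝ) - M1 * M1ᵀ).PosSemidef ∧
          sysRow A B * (bigX Xp X U - E * ΔhatR Φ M1) * Φ.toBlocks₂₂ = 0 ∧
          sysRow A B * (bigX Xp X U - E * ΔhatN Φ M2) *
            ((1 : Matrix (Fin T) (Fin T) ℝ) - Φ.toBlocks₂₂ * pinv Φ.toBlocks₂₂) = 0) ∧
    SigmaSet Xp X U E Φ = SigmaR Xp X U E Φ ∩ SigmaN Xp X U E Φ := by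
  have main : ∀ (A : Matrix (Fin n) (Fin n) ℝ) (B : Matrix (Fin n) (Fin m) ℝ),
      (A, B) ∈ SigmaSet Xp X U E Φ ↔
        ((∃ M1 : Matrix (Fin nh) (Fin T) ℝ,
            ((1 : Matrix (Fin nh) (Fin nh) ℝ) - M1 * M1ᵀ).PosSemidef ∧
            sysRow A B * (bigX Xp X U - E * ΔhatR Φ M1) * Φ.toBlocks₂₂ = 0) ∧
         (∃ M2 : Matrix (Fin nh) (Fin T) ℝ, sysRow A B * (bigX Xp X U - E * ΔhatN Φ M2) *
            ((1 : Matrix (Fin T) (Fin T) ℝ) - Φ.toBlocks₂₂ * pinv Φ.toBlocks₂₂) = 0)) := by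
    intro A B
    rw [← AuxMP.key_iff Φ hΦ (sysRow A B) (bigX Xp X U) E]
    simp only [SigmaSet, Set.mem_setOf_eq, Dset]
    constructor
    · rintro ⟨Δ', ⟨Δh, hZ, rfl⟩, heq⟩
      exact ⟨Δh, hZ, heq⟩
    · rintro ⟨Δh, hZ, heq⟩
      exact ⟨E * Δh, ⟨Δh, hZ, rfl⟩, heq⟩
  constructor
  · intro A B
    rw [main A B]
    constructor
    · rintro ⟨⟨M1, h1, h2⟩, ⟨M2, h3⟩⟩
      exact ⟨M1, M2, h1, h2, h3⟩
    · rintro ⟨M1, M2, h1, h2, h3⟩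
      exact ⟨⟨M1, h1, h2⟩, ⟨M2, h3⟩⟩
  · ext ⟨A, B⟩
    rw [Set.mem_inter_iff]
    simp only [SigmaR, SigmaN, Set.mem_setOf_eq]
    exact main A B

end
end

section
/- Fix (A,B) ∈ ℝ^{n×n}×ℝ^{n×m}, C ∈ ℝ^{p×n}, D ∈ ℝ^{p×m}, and γ > 0. Matrices P ≻ 0 ∈ S^n and K ∈ ℝ^{m×n} satisfy the block matrix inequality (block sizes n,n,n,p) [[P,0,A_KᵀP,C_Kᵀ],[0,γI_n,P,0],[PA_K,P,P,0],[C_K,0,0,γI_p]] ≻ 0, where A_K := A+BK and C_K := C+DK, if and only if Y := γP^{-1} and L := KY satisfy both (i) Y − γ^{-2}C_{Y,L}ᵀC_{Y,L} ≻ 0, where C_{Y,L} := CY+DL, and (ii) Y − (AY+BL)(Y − γ^{-2}C_{Y,L}ᵀC_{Y,L})^{-1}(AY+BL)ᵀ − I_n ≻ 0. -/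
open Matrix
open scoped Matrix

noncomputable section

/-- The `H∞` block matrix `[[P,0,A_KᵀP,C_Kᵀ],[0,γI,P,0],[PA_K,P,P,0],[C_K,0,0,γI]]`,
block sizes `(n,n,n,p)`. -/
def Hinf4 {n m p : ℕ} (γ : ℝ) (C : Matrix (Fin p) (Fin n) ℝ) (D : Matrix (Fin p) (Fin m) ℝ)
    (A : Matrix (Fin n) (Fin n) ℝ) (B : Matrix (Fin n) (Fin m) ℝ)
    (P : Matrix (Fin n) (Fin n) ℝ) (K : Matrix (Fin m) (Fin n) ℝ) :
    Matrix ((Fin n ⊕ Fin n) ⊕ (Fin n ⊕ Fin p)) ((Fin n ⊕ Fin n) ⊕ (Fin n ⊕ Fin p)) ℝ :=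
  fromBlocks
    (fromBlocks P 0 0 (γ • (1 : Matrix (Fin n) (Fin n) ℝ)))
    (fromBlocks ((A + B * K)ᵀ * P) (C + D * K)ᵀ P 0)
    (fromBlocks (P * (A + B * K)) P (C + D * K) 0)
    (fromBlocks P 0 0 (γ • (1 : Matrix (Fin p) (Fin p) ℝ)))

section Helpers

variable {m' n' : Type*} [Fintype m'] [Fintype n'] [DecidableEq m'] [DecidableEq n']

lemma real_isHermitian_smul {c : ℝ} {M : Matrix m' m' ℝ} (h : M.IsHermitian) :
    (c • M).IsHermitian := by
  unfold Matrix.IsHermitian at *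
  rw [conjTranspose_smul, h]
  simp [starRingEnd_apply]

lemma smul_posDef {c : ℝ} (hc : 0 < c) {M : Matrix m' m' ℝ} (hM : M.PosDef) :
    (c • M).PosDef := by
  refine posDef_iff_dotProduct_mulVec.mpr ⟨real_isHermitian_smul hM.1, fun x hx => ?_⟩
  rw [smul_mulVec, dotProduct_smul, smul_eq_mul]
  exact mul_pos hc (hM.dotProduct_mulVec_pos hx)

lemma smul_posDef_iff {c : ℝ} (hc : 0 < c) {M : Matrix m' m' ℝ} :
    (c • M).PosDef ↔ M.PosDef := by
  refine ⟨fun h => ?_, smul_posDef hc⟩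
  have := smul_posDef (inv_pos.mpr hc) h
  rwa [smul_smul, inv_mul_cancel₀ hc.ne', one_smul] at this

lemma posDef_conj_of {U : Matrix m' m' ℝ} (hU : IsUnit U) {M : Matrix m' m' ℝ}
    (hM : M.PosDef) : (Uᴴ * M * U).PosDef := by
  refine posDef_iff_dotProduct_mulVec.mpr ⟨?_, fun x hx => ?_⟩
  · have h := hM.1
    unfold Matrix.IsHermitian at *
    rw [conjTranspose_mul, conjTranspose_mul, conjTranspose_conjTranspose, h,
      Matrix.mul_assoc]
  · have hUx : U *ᵥ x ≠ 0 := by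
      have hinj : Function.Injective (U.mulVec) :=
        Matrix.mulVec_injective_iff_isUnit.mpr hU
      intro h
      exact hx (hinj (by simpa using h))
    have heq : star x ⬝ᵥ (Uᴴ * M * U) *ᵥ x = star (U *ᵥ x) ⬝ᵥ M *ᵥ (U *ᵥ x) := by
      rw [← mulVec_mulVec, ← mulVec_mulVec, dotProduct_mulVec, star_mulVec,
        dotProduct_mulVec, vecMul_vecMul]
    rw [heq]
    exact hM.dotProduct_mulVec_pos hUx

lemma posDef_conj_iff {U : Matrix m' m' ℝ} (hU : IsUnit U) {M : Matrix m' m' ℝ} :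
    (Uᴴ * M * U).PosDef ↔ M.PosDef := by
  refine ⟨fun h => ?_, posDef_conj_of hU⟩
  have hdet : IsUnit U.det := (isUnit_iff_isUnit_det U).mp hU
  have hUinv : IsUnit U⁻¹ := by
    refine (isUnit_iff_isUnit_det _).mpr ?_
    rw [det_nonsing_inv]
    exact hdet.ringInverse
  have h2 := posDef_conj_of hUinv h
  have key : (U⁻¹)ᴴ * (Uᴴ * M * U) * U⁻¹ = M := by
    have h1 : U * U⁻¹ = 1 := Matrix.mul_nonsing_inv U hdet
    calc (U⁻¹)ᴴ * (Uᴴ * M * U) * U⁻¹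
        = (U * U⁻¹)ᴴ * M * (U * U⁻¹) := by
          rw [conjTranspose_mul]
          noncomm_ring
      _ = M := by rw [h1]; simp
  rwa [key] at h2

lemma sum_elim_ne_zero_left {x : m' → ℝ} (hx : x ≠ 0) (y : n' → ℝ) :
    (Sum.elim x y) ≠ 0 := by
  intro h
  exact hx (funext fun i => congrFun h (Sum.inl i))

lemma sum_elim_ne_zero_right (x : m' → ℝ) {y : n' → ℝ} (hy : y ≠ 0) :
    (Sum.elim x y) ≠ 0 := by
  intro h
  exact hy (funext fun i => congrFun h (Sum.inr i))

theorem posDef_fromBlocks₁₁ {A : Matrix m' m' ℝ} (B : Matrix m' n' ℝ) (D : Matrix n' n' ℝ)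
    (hA : A.PosDef) :
    (fromBlocks A B Bᴴ D).PosDef ↔ (D - Bᴴ * A⁻¹ * B).PosDef := by
  haveI := A.invertibleOfIsUnitDet ((isUnit_iff_isUnit_det A).mp hA.isUnit)
  rw [posDef_iff_dotProduct_mulVec, posDef_iff_dotProduct_mulVec, IsHermitian.fromBlocks₁₁ _ _ hA.1]
  constructor
  · rintro ⟨h1, h2⟩
    refine ⟨h1, fun x hx => ?_⟩
    have := h2 (x := Sum.elim (-((A⁻¹ * B) *ᵥ x)) x) (sum_elim_ne_zero_right _ hx)
    rw [dotProduct_mulVec, schur_complement_eq₁₁ B D _ _ hA.1, neg_add_cancel,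
      dotProduct_zero, zero_add] at this
    rw [dotProduct_mulVec]
    exact this
  · rintro ⟨h1, h2⟩
    refine ⟨h1, fun x hx => ?_⟩
    rw [dotProduct_mulVec, ← Sum.elim_comp_inl_inr x, schur_complement_eq₁₁ B D _ _ hA.1]
    by_cases hr : x ∘ Sum.inr = 0
    · have hl : x ∘ Sum.inl ≠ 0 := by
        intro hl
        exact hx (by rw [← Sum.elim_comp_inl_inr x, hl, hr]; ext (i|i) <;> rfl)
      have h0 : x ∘ Sum.inl + (A⁻¹ * B) *ᵥ (x ∘ Sum.inr) = x ∘ Sum.inl := by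
        rw [hr, mulVec_zero, add_zero]
      rw [h0, hr]
      have hz : star (0 : n' → ℝ) ᵥ* (D - Bᴴ * A⁻¹ * B) ⬝ᵥ (0 : n' → ℝ) = 0 := by simp
      rw [hz, add_zero, ← dotProduct_mulVec]
      exact hA.dotProduct_mulVec_pos hl
    · apply add_pos_of_nonneg_of_pos
      · rw [← dotProduct_mulVec]
        exact hA.posSemidef.dotProduct_mulVec_nonneg _
      · rw [← dotProduct_mulVec]
        exact h2 hr

theorem posDef_fromBlocks₂₂ (A : Matrix m' m' ℝ) (B : Matrix m' n' ℝ) {D : Matrix n' n' ℝ}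
    (hD : D.PosDef) :
    (fromBlocks A B Bᴴ D).PosDef ↔ (A - B * D⁻¹ * Bᴴ).PosDef := by
  haveI := D.invertibleOfIsUnitDet ((isUnit_iff_isUnit_det D).mp hD.isUnit)
  rw [posDef_iff_dotProduct_mulVec, posDef_iff_dotProduct_mulVec, IsHermitian.fromBlocks₂₂ _ _ hD.1]
  constructor
  · rintro ⟨h1, h2⟩
    refine ⟨h1, fun x hx => ?_⟩
    have := h2 (x := Sum.elim x (-((D⁻¹ * Bᴴ) *ᵥ x))) (sum_elim_ne_zero_left hx _)
    rw [dotProduct_mulVec, schur_complement_eq₂₂ A B _ _ hD.1, add_neg_cancel,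
      dotProduct_zero, zero_add] at this
    rw [dotProduct_mulVec]
    exact this
  · rintro ⟨h1, h2⟩
    refine ⟨h1, fun x hx => ?_⟩
    rw [dotProduct_mulVec, ← Sum.elim_comp_inl_inr x, schur_complement_eq₂₂ A B _ _ hD.1]
    by_cases hl : x ∘ Sum.inl = 0
    · have hr : x ∘ Sum.inr ≠ 0 := by
        intro hr
        exact hx (by rw [← Sum.elim_comp_inl_inr x, hl, hr]; ext (i|i) <;> rfl)
      have h0 : (D⁻¹ * Bᴴ) *ᵥ (x ∘ Sum.inl) + x ∘ Sum.inr = x ∘ Sum.inr := by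
        rw [hl, mulVec_zero, zero_add]
      rw [h0, hl]
      have hz : star (0 : m' → ℝ) ᵥ* (A - B * D⁻¹ * Bᴴ) ⬝ᵥ (0 : m' → ℝ) = 0 := by simp
      rw [hz, add_zero, ← dotProduct_mulVec]
      exact hD.dotProduct_mulVec_pos hr
    · apply add_pos_of_nonneg_of_pos
      · rw [← dotProduct_mulVec]
        exact hD.posSemidef.dotProduct_mulVec_nonneg _
      · rw [← dotProduct_mulVec]
        exact h2 hl

theorem posDef_toBlocks₂₂' {A : Matrix m' m' ℝ} {B : Matrix m' n' ℝ} {C : Matrix n' m' ℝ}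
    {D : Matrix n' n' ℝ} (h : (fromBlocks A B C D).PosDef) : D.PosDef := by
  refine posDef_iff_dotProduct_mulVec.mpr ⟨?_, ?_⟩
  · have := congrArg Matrix.toBlocks₂₂ h.1
    rw [fromBlocks_conjTranspose, toBlocks_fromBlocks₂₂, toBlocks_fromBlocks₂₂] at this
    exact this
  · intro y hy
    have := h.dotProduct_mulVec_pos (x := Sum.elim (0 : m' → ℝ) y) (sum_elim_ne_zero_right _ hy)
    simpa [fromBlocks_mulVec, Function.star_sumElim, sumElim_dotProduct_sumElim] using this

theorem posDef_fromBlocks_diag {A : Matrix m' m' ℝ} {D : Matrix n' n' ℝ}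
    (hA : A.PosDef) (hD : D.PosDef) : (fromBlocks A 0 0 D).PosDef := by
  have h := posDef_fromBlocks₁₁ (0 : Matrix m' n' ℝ) D hA
  rw [conjTranspose_zero] at h
  rw [h]
  simpa using hD

lemma fromBlocks_sub' {l o : Type*} (A A' : Matrix n' l ℝ) (B B' : Matrix n' m' ℝ)
    (C C' : Matrix o l ℝ) (D D' : Matrix o m' ℝ) :
    fromBlocks A B C D - fromBlocks A' B' C' D' =
      fromBlocks (A - A') (B - B') (C - C') (D - D') := by
  ext (i|i) (j|j) <;> rfl

end Helpers

set_option maxHeartbeats 1000000 in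
theorem stmt9 {n m p : ℕ} (hn : 0 < n) (hm : 0 < m) (hp : 0 < p)
    (A : Matrix (Fin n) (Fin n) ℝ) (B : Matrix (Fin n) (Fin m) ℝ)
    (C : Matrix (Fin p) (Fin n) ℝ) (D : Matrix (Fin p) (Fin m) ℝ)
    (γ : ℝ) (hγ : 0 < γ)
    (P : Matrix (Fin n) (Fin n) ℝ) (K : Matrix (Fin m) (Fin n) ℝ) (hP : P.PosDef) :
    (Hinf4 γ C D A B P K).PosDef ↔
      (let Y := γ • P⁻¹
       let L := K * Y
       let CYL := C * Y + D * L
       (Y - (γ ^ 2)⁻¹ • (CYLᵀ * CYL)).PosDef ∧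
       (Y - (A * Y + B * L) * (Y - (γ ^ 2)⁻¹ • (CYLᵀ * CYL))⁻¹ * (A * Y + B * L)ᵀ -
         1).PosDef) := by
  have hdet : IsUnit P.det := hP.det_pos.ne'.isUnit
  have h1 : P * P⁻¹ = 1 := Matrix.mul_nonsing_inv P hdet
  have h2 : P⁻¹ * P = 1 := Matrix.nonsing_inv_mul P hdet
  have hPt : Pᵀ = P := by
    rw [← conjTranspose_eq_transpose_of_trivial]; exact hP.1
  have hPinvt : P⁻¹ᵀ = P⁻¹ := by
    rw [← conjTranspose_eq_transpose_of_trivial]; exact hP.inv.1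
  set AK := A + B * K with hAKdef
  set CK := C + D * K with hCKdef
  set Y := γ • P⁻¹ with hYdef
  have hYpos : Y.PosDef := smul_posDef hγ hP.inv
  have hYt : Yᵀ = Y := by rw [hYdef, transpose_smul, hPinvt]
  have hYdet : IsUnit Y.det := hYpos.det_pos.ne'.isUnit
  have hYY : Y * Y⁻¹ = 1 := Matrix.mul_nonsing_inv Y hYdet
  have hYY' : Y⁻¹ * Y = 1 := Matrix.nonsing_inv_mul Y hYdet
  have hγ2 : (0:ℝ) < γ ^ 2 := by positivity
  show (Hinf4 γ C D A B P K).PosDef ↔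
      ((Y - (γ ^ 2)⁻¹ • ((C * Y + D * (K * Y))ᵀ * (C * Y + D * (K * Y)))).PosDef ∧
       (Y - (A * Y + B * (K * Y)) *
          (Y - (γ ^ 2)⁻¹ • ((C * Y + D * (K * Y))ᵀ * (C * Y + D * (K * Y))))⁻¹ *
          (A * Y + B * (K * Y))ᵀ - 1).PosDef)
  have e1 : C * Y + D * (K * Y) = CK * Y := by rw [hCKdef, Matrix.add_mul, Matrix.mul_assoc]
  have e2 : A * Y + B * (K * Y) = AK * Y := by rw [hAKdef, Matrix.add_mul, Matrix.mul_assoc]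
  rw [e1, e2]
  set W := γ ^ 2 • (1 : Matrix (Fin p) (Fin p) ℝ) - CK * Y * CKᵀ with hWdef
  set S₁ := Y - (γ ^ 2)⁻¹ • ((CK * Y)ᵀ * (CK * Y)) with hS₁def
  -- step 1 : split Hinf4
  have hM12H : (fromBlocks (AKᵀ * P) CKᵀ P (0 : Matrix (Fin n) (Fin p) ℝ))ᴴ
      = fromBlocks (P * AK) P CK 0 := by
    rw [fromBlocks_conjTranspose]
    simp [conjTranspose_eq_transpose_of_trivial, transpose_mul, hPt]
  have hMeq : Hinf4 γ C D A B P K =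
      fromBlocks (fromBlocks P 0 0 (γ • 1)) (fromBlocks (AKᵀ * P) CKᵀ P 0)
        ((fromBlocks (AKᵀ * P) CKᵀ P (0 : Matrix (Fin n) (Fin p) ℝ))ᴴ)
        (fromBlocks P 0 0 (γ • 1)) := by
    rw [hM12H]; rfl
  have hγI : (γ • (1 : Matrix (Fin n) (Fin n) ℝ)).PosDef := smul_posDef hγ Matrix.PosDef.one
  have hM11 : (fromBlocks P 0 0 (γ • (1 : Matrix (Fin n) (Fin n) ℝ))).PosDef :=
    posDef_fromBlocks_diag hP hγI
  have hM11inv : (fromBlocks P (0 : Matrix (Fin n) (Fin n) ℝ) 0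
      (γ • (1 : Matrix (Fin n) (Fin n) ℝ)))⁻¹ = fromBlocks P⁻¹ 0 0 (γ⁻¹ • 1) := by
    apply Matrix.inv_eq_right_inv
    rw [fromBlocks_multiply]
    simp [h1, Matrix.smul_mul, Matrix.mul_smul, smul_smul, inv_mul_cancel₀ hγ.ne', mul_inv_cancel₀ hγ.ne', fromBlocks_one]
  have step1 : (Hinf4 γ C D A B P K).PosDef ↔
      ((fromBlocks P 0 0 (γ • 1) : Matrix (Fin n ⊕ Fin p) (Fin n ⊕ Fin p) ℝ) -
        (fromBlocks (AKᵀ * P) CKᵀ P (0 : Matrix (Fin n) (Fin p) ℝ))ᴴ *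
        ((fromBlocks P 0 0 (γ • 1))⁻¹ : Matrix (Fin n ⊕ Fin n) (Fin n ⊕ Fin n) ℝ) *
        fromBlocks (AKᵀ * P) CKᵀ P 0).PosDef := by
    rw [hMeq]
    exact posDef_fromBlocks₁₁ _ _ hM11
  -- step 2 : compute the Schur complement S
  have hS : (fromBlocks P 0 0 (γ • 1) : Matrix (Fin n ⊕ Fin p) (Fin n ⊕ Fin p) ℝ) -
      (fromBlocks (AKᵀ * P) CKᵀ P (0 : Matrix (Fin n) (Fin p) ℝ))ᴴ *
      ((fromBlocks P 0 0 (γ • 1))⁻¹ : Matrix (Fin n ⊕ Fin n) (Fin n ⊕ Fin n) ℝ) *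
      fromBlocks (AKᵀ * P) CKᵀ P 0 =
      fromBlocks (P - (P * AK * P⁻¹ * (AKᵀ * P) + γ⁻¹ • (P * P)))
        (-(P * AK * P⁻¹ * CKᵀ)) (-(CK * P⁻¹ * (AKᵀ * P))) (γ • 1 - CK * P⁻¹ * CKᵀ) := by
    rw [hM12H, hM11inv, fromBlocks_multiply, fromBlocks_multiply, fromBlocks_sub',
      fromBlocks_inj]
    refine ⟨?_, ?_, ?_, ?_⟩
    · simp [Matrix.mul_smul, Matrix.smul_mul]
    · simp
    · simp
    · simp
  -- step 3 : conjugate by G and scale by γ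
  have hGH : (fromBlocks P⁻¹ 0 0 (1 : Matrix (Fin p) (Fin p) ℝ))ᴴ =
      fromBlocks P⁻¹ 0 0 1 := by
    rw [fromBlocks_conjTranspose]
    simp [conjTranspose_eq_transpose_of_trivial, hPinvt]
  have hGu : IsUnit (fromBlocks P⁻¹ 0 0 (1 : Matrix (Fin p) (Fin p) ℝ)) := by
    rw [isUnit_iff_isUnit_det, det_fromBlocks_zero₂₁, det_one, mul_one, det_nonsing_inv]
    exact hdet.ringInverse
  have hN : γ • ((fromBlocks P⁻¹ 0 0 (1 : Matrix (Fin p) (Fin p) ℝ))ᴴ *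
      (fromBlocks (P - (P * AK * P⁻¹ * (AKᵀ * P) + γ⁻¹ • (P * P)))
        (-(P * AK * P⁻¹ * CKᵀ)) (-(CK * P⁻¹ * (AKᵀ * P))) (γ • 1 - CK * P⁻¹ * CKᵀ)) *
      (fromBlocks P⁻¹ 0 0 1)) =
      fromBlocks (Y - AK * Y * AKᵀ - 1) (-(AK * Y * CKᵀ)) (-(AK * Y * CKᵀ))ᴴ W := by
    rw [hGH, fromBlocks_multiply, fromBlocks_multiply, fromBlocks_smul, fromBlocks_inj]
    have hc2 : ∀ Z : Matrix (Fin n) (Fin n) ℝ, P⁻¹ * (P * Z) = Z := fun Z => by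
      rw [← Matrix.mul_assoc, h2, Matrix.one_mul]
    have hc2p : ∀ Z : Matrix (Fin n) (Fin p) ℝ, P⁻¹ * (P * Z) = Z := fun Z => by
      rw [← Matrix.mul_assoc, h2, Matrix.one_mul]
    refine ⟨?_, ?_, ?_, ?_⟩
    · simp [hYdef, Matrix.mul_sub, Matrix.sub_mul, Matrix.mul_add, Matrix.add_mul,
        Matrix.mul_smul, Matrix.smul_mul, smul_smul, Matrix.mul_assoc, h1, h2, hc2,
        smul_sub, smul_add, Matrix.mul_one, Matrix.one_mul, inv_mul_cancel₀ hγ.ne',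
        mul_inv_cancel₀ hγ.ne', one_smul]
      abel
    · simp [hYdef, Matrix.mul_neg, Matrix.neg_mul, Matrix.mul_assoc, hc2, hc2p, h1,
        Matrix.mul_smul, Matrix.smul_mul, Matrix.mul_one, Matrix.one_mul]
    · simp [hYdef, conjTranspose_eq_transpose_of_trivial, transpose_neg, transpose_mul,
        transpose_transpose, transpose_smul, hPinvt, Matrix.mul_neg, Matrix.neg_mul,
        Matrix.mul_assoc, hc2, h1, Matrix.mul_smul, Matrix.smul_mul, Matrix.mul_one,
        Matrix.one_mul]
    · rw [hWdef]
      simp [hYdef, smul_sub, smul_smul, sq, Matrix.mul_smul, Matrix.smul_mul,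
        Matrix.mul_assoc, Matrix.mul_one, Matrix.one_mul]
  have chain : (Hinf4 γ C D A B P K).PosDef ↔
      (fromBlocks (Y - AK * Y * AKᵀ - 1) (-(AK * Y * CKᵀ)) (-(AK * Y * CKᵀ))ᴴ W).PosDef := by
    rw [step1, hS, ← posDef_conj_iff hGu
      (M := fromBlocks (P - (P * AK * P⁻¹ * (AKᵀ * P) + γ⁻¹ • (P * P)))
        (-(P * AK * P⁻¹ * CKᵀ)) (-(CK * P⁻¹ * (AKᵀ * P))) (γ • 1 - CK * P⁻¹ * CKᵀ)),
      ← smul_posDef_iff hγ, hN]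
  -- step 4 : W ≻ 0 ↔ S₁ ≻ 0
  have hCYt : (CK * Y)ᵀ = Y * CKᵀ := by rw [transpose_mul, hYt]
  have hI2 : ((γ ^ 2) • (1 : Matrix (Fin p) (Fin p) ℝ)).PosDef :=
    smul_posDef hγ2 Matrix.PosDef.one
  have hI2inv : ((γ ^ 2) • (1 : Matrix (Fin p) (Fin p) ℝ))⁻¹ = (γ ^ 2)⁻¹ • 1 := by
    apply Matrix.inv_eq_right_inv
    rw [Matrix.smul_mul, Matrix.mul_smul, smul_smul, mul_inv_cancel₀ hγ2.ne', one_smul,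
      Matrix.one_mul]
  have hq1 : (fromBlocks Y (Y * CKᵀ) (Y * CKᵀ)ᴴ ((γ ^ 2) • 1)).PosDef ↔ W.PosDef := by
    rw [posDef_fromBlocks₁₁ _ _ hYpos]
    have : (γ ^ 2) • (1 : Matrix (Fin p) (Fin p) ℝ) - (Y * CKᵀ)ᴴ * Y⁻¹ * (Y * CKᵀ) = W := by
      rw [hWdef]
      have hy2 : ∀ Z : Matrix (Fin n) (Fin p) ℝ, Y⁻¹ * (Y * Z) = Z := fun Z => by
        rw [← Matrix.mul_assoc, hYY', Matrix.one_mul]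
      simp [conjTranspose_eq_transpose_of_trivial, transpose_mul, hYt, Matrix.mul_assoc, hy2]
    rw [this]
  have hq2 : (fromBlocks Y (Y * CKᵀ) (Y * CKᵀ)ᴴ ((γ ^ 2) • 1)).PosDef ↔ S₁.PosDef := by
    rw [posDef_fromBlocks₂₂ _ _ hI2]
    have : Y - (Y * CKᵀ) * ((γ ^ 2) • (1 : Matrix (Fin p) (Fin p) ℝ))⁻¹ * (Y * CKᵀ)ᴴ = S₁ := by
      rw [hI2inv, hS₁def]
      simp [conjTranspose_eq_transpose_of_trivial, transpose_mul, hYt, Matrix.mul_smul,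
        Matrix.smul_mul, Matrix.mul_one, Matrix.mul_assoc]
    rw [this]
  have hWS₁ : W.PosDef ↔ S₁.PosDef := hq1.symm.trans hq2
  -- step 5 : key identity
  have key : W.PosDef → Y - (AK * Y) * S₁⁻¹ * (AK * Y)ᵀ - 1 =
      (Y - AK * Y * AKᵀ - 1) - (-(AK * Y * CKᵀ)) * W⁻¹ * (-(AK * Y * CKᵀ))ᴴ := by
    intro hW
    have hWdet : IsUnit W.det := hW.det_pos.ne'.isUnit
    have hWW : W * W⁻¹ = 1 := Matrix.mul_nonsing_inv W hWdet
    have hCYC : CK * (Y * CKᵀ) = γ ^ 2 • 1 - W := by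
      rw [hWdef, sub_sub_cancel, Matrix.mul_assoc]
    have keycalc : S₁ * (Y⁻¹ + CKᵀ * (W⁻¹ * CK)) = 1 := by
      rw [hS₁def, hCYt]
      have hmid : CK * (Y * (CKᵀ * (W⁻¹ * CK))) = γ ^ 2 • (W⁻¹ * CK) - CK := by
        have ha : CK * (Y * (CKᵀ * (W⁻¹ * CK))) = (CK * (Y * CKᵀ)) * (W⁻¹ * CK) := by
          simp [Matrix.mul_assoc]
        rw [ha, hCYC, Matrix.sub_mul, Matrix.smul_mul, Matrix.one_mul, ← Matrix.mul_assoc,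
          hWW, Matrix.one_mul]
      simp only [Matrix.sub_mul, Matrix.mul_add, Matrix.add_mul, Matrix.smul_mul,
        Matrix.mul_smul, Matrix.mul_assoc, hYY, Matrix.mul_one, Matrix.one_mul, hmid,
        Matrix.mul_sub, smul_sub, smul_smul, inv_mul_cancel₀ hγ2.ne', one_smul]
      abel
    have hS₁inv : S₁⁻¹ = Y⁻¹ + CKᵀ * (W⁻¹ * CK) := Matrix.inv_eq_right_inv keycalc
    have hy1 : ∀ Z : Matrix (Fin n) (Fin n) ℝ, Y⁻¹ * (Y * Z) = Z := fun Z => by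
      rw [← Matrix.mul_assoc, hYY', Matrix.one_mul]
    rw [hS₁inv]
    simp only [conjTranspose_eq_transpose_of_trivial, transpose_neg, transpose_mul,
      transpose_transpose, hYt, Matrix.mul_add, Matrix.add_mul, Matrix.mul_assoc,
      Matrix.neg_mul, Matrix.mul_neg, neg_neg, hy1]
    abel
  -- conclusion
  rw [chain]
  constructor
  · intro h
    have hW : W.PosDef := posDef_toBlocks₂₂' h
    refine ⟨hWS₁.mp hW, ?_⟩
    rw [key hW]
    exact (posDef_fromBlocks₂₂ _ _ hW).mp h
  · rintro ⟨hS₁p, hT⟩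
    have hW := hWS₁.mpr hS₁p
    apply (posDef_fromBlocks₂₂ _ _ hW).mpr
    rw [← key hW]
    exact hT


end
end
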